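/- Let k ≥ 2 be an integer, let D be a positive non-square discriminant, and let Q = [a,b,c] be an integral binary quadratic form with b² − 4ac = D. Then for all τ ∈ ℍ, 𝔉_{2−2k}(Q(·,1)^{k−1})(τ) = −Q(τ,1)^{k−1}, where Q(z,1) = az² + bz + c. -/

import Mathlib

noncomputable section

open Complex Real Finset

/-- The upper half-plane, as a subset of `ℂ`. -/
def UpperHalf : Set ℂ := {z : ℂ | 0 < z.im}

/-- The holomorphic Wirtinger derivative `∂f/∂τ = (1/2)(∂f/∂u − i ∂f/∂v)`. -/
def wirtinger (f : ℂ → ℂ) (τ : ℂ) : ℂ :=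
  (1 / 2) * (fderiv ℝ f τ 1 - Complex.I * fderiv ℝ f τ Complex.I)

/-- The antiholomorphic Wirtinger derivative `∂f/∂τ̄ = (1/2)(∂f/∂u + i ∂f/∂v)`. -/
def wirtingerBar (f : ℂ → ℂ) (τ : ℂ) : ℂ :=
  (1 / 2) * (fderiv ℝ f τ 1 + Complex.I * fderiv ℝ f τ Complex.I)

/-- The Maass raising operator `R_κ(f) = 2i ∂f/∂τ + (κ/v) f`. -/
def raise (κ : ℤ) (f : ℂ → ℂ) (τ : ℂ) : ℂ :=
  2 * Complex.I * wirtinger f τ + ((κ : ℂ) / (τ.im : ℂ)) * f τ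

/-- Iterated Maass raising operator `R_κ^n = R_{κ+2(n−1)} ∘ ⋯ ∘ R_κ`. -/
def raiseIter (κ : ℤ) : ℕ → (ℂ → ℂ) → (ℂ → ℂ)
  | 0, f => f
  | n + 1, f => raise (κ + 2 * (n : ℤ)) (raiseIter κ n f)

/-- The flipping operator `𝔉_{2−2k}(f)(τ) = −(v^{2k−2}/(2k−2)!) conj(R_{2−2k}^{2k−2}(f)(τ))`. -/
def flipOp (k : ℕ) (f : ℂ → ℂ) (τ : ℂ) : ℂ :=
  -(((τ.im : ℂ) ^ (2 * k - 2)) / ((2 * k - 2).factorial : ℂ)) *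
    (starRingEnd ℂ) (raiseIter (2 - 2 * (k : ℤ)) (2 * k - 2) f τ)

/-- The weight `−2k` flipping operator `𝔉_{−2k}(f)(τ) = −(v^{2k}/(2k)!) conj(R_{−2k}^{2k}(f)(τ))`. -/
def flipOpNeg (k : ℕ) (f : ℂ → ℂ) (τ : ℂ) : ℂ :=
  -(((τ.im : ℂ) ^ (2 * k)) / ((2 * k).factorial : ℂ)) *
    (starRingEnd ℂ) (raiseIter (-(2 * (k : ℤ))) (2 * k) f τ)

/-- The Bol-type operator `𝒟 = (1/(2πi)) ∂/∂τ`. -/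
def bol (f : ℂ → ℂ) : ℂ → ℂ := fun τ => (1 / (2 * (π : ℂ) * Complex.I)) * wirtinger f τ

/-- Iterates `𝒟^r` of the Bol-type operator. -/
def bolIter (r : ℕ) (f : ℂ → ℂ) : ℂ → ℂ := bol^[r] f

/-- The shadow operator `ξ_{2−2k}(f)(τ) = 2i v^{2−2k} conj(∂f/∂τ̄(τ))`. -/
def xiOp (k : ℕ) (f : ℂ → ℂ) (τ : ℂ) : ℂ :=
  2 * Complex.I * (τ.im : ℂ) ^ ((2 : ℤ) - 2 * k) * (starRingEnd ℂ) (wirtingerBar f τ)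

/-- Integral binary quadratic forms `[a,b,c]` of discriminant `D`. -/
def QD (D : ℤ) : Type := {q : ℤ × ℤ × ℤ // q.2.1 ^ 2 - 4 * q.1 * q.2.2 = D}

/-- `Q(z,1) = a z² + b z + c`. -/
def qval (q : ℤ × ℤ × ℤ) (z : ℂ) : ℂ :=
  (q.1 : ℂ) * z ^ 2 + (q.2.1 : ℂ) * z + (q.2.2 : ℂ)

/-- `Q_τ = (a(u²+v²) + bu + c)/v`. -/
def qtau (q : ℤ × ℤ × ℤ) (τ : ℂ) : ℝ :=
  ((q.1 : ℝ) * (τ.re ^ 2 + τ.im ^ 2) + (q.2.1 : ℝ) * τ.re + (q.2.2 : ℝ)) / τ.im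

/-- The exceptional set `E_D`, the union of the geodesics `Q_τ = 0`. -/
def ED (D : ℤ) : Set ℂ := {τ : ℂ | ∃ q : QD D, qtau q.1 τ = 0}

/-- The incomplete beta function `β(x;r,s) = ∫₀ˣ t^{r−1}(1−t)^{s−1} dt`. -/
def betaInt (x r s : ℝ) : ℝ := ∫ t in (0 : ℝ)..x, t ^ (r - 1) * (1 - t) ^ (s - 1)

/-- The locally harmonic Maass form `𝓕_{1−k,D}` of Bringmann–Kane–Kohnen. -/
def FBKK (k : ℕ) (D : ℕ) (τ : ℂ) : ℂ :=
  (((D : ℝ) ^ ((1 : ℝ) / 2 - (k : ℝ)) / (2 * ((2 * k - 2).choose (k - 1) : ℝ) * π) : ℝ) : ℂ) *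
    ∑' q : QD (D : ℤ),
      ((Real.sign (qtau q.1 τ) : ℝ) : ℂ) * qval q.1 τ ^ (k - 1) *
        ((betaInt ((D : ℝ) * τ.im ^ 2 / ‖qval q.1 τ‖ ^ 2)
            ((k : ℝ) - 1 / 2) (1 / 2) : ℝ) : ℂ)

/-- The function `𝒢_{−k,D}` of Bringmann–Mono. -/
def GBM (k : ℕ) (D : ℕ) (τ : ℂ) : ℂ :=
  (1 / 2 : ℂ) *
    ∑' q : QD (D : ℤ),
      qval q.1 τ ^ k *
        ((betaInt ((D : ℝ) * τ.im ^ 2 / ‖qval q.1 τ‖ ^ 2)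
            ((k : ℝ) + 1 / 2) (1 / 2) : ℝ) : ℂ)

/-- The rising factorial `(a)_n = a(a+1)⋯(a+n−1)`. -/
def risingFactorial (a : ℤ) (n : ℕ) : ℤ := ∏ i ∈ Finset.range n, (a + (i : ℤ))

/-! Along a fixed value of `τ̄` we have `τ = τ̄ + 2iv`, so on functions `g(τ̄) v^m` with `g`
holomorphic the raising operator `R_κ` acts as `d/dv + κ/v` and sends `g(τ̄) v^m` to
`(κ + m) g(τ̄) v^(m-1)`. Taylor expansion at `τ̄` writes a polynomial `P` of degree at most `N` as
`∑ⱼ (2i)^j P^[j](τ̄) v^j`, and `R_{-N}^N` multiplies its `j`-th term by the rising factorial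
`(j - N)_N`, which vanishes unless `j = 0`. Hence `R_{-N}^N P(τ) = (-1)^N N! v^(-N) P(τ̄)`, and for
`N = 2k - 2` and `P` with real coefficients the flipping operator returns `-P`. -/

open Polynomial ComplexConjugate Topology

lemma wirtinger_eq_of_hasFDerivAt {f : ℂ → ℂ} {L : ℂ →L[ℝ] ℂ} {τ : ℂ} (h : HasFDerivAt f L τ) :
    wirtinger f τ = (1 / 2) * (L 1 - Complex.I * L Complex.I) := by
  rw [wirtinger, h.fderiv]

lemma wirtinger_congr_of_eventuallyEq {f g : ℂ → ℂ} {τ : ℂ} (h : f =ᶠ[𝓝 τ] g) :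
    wirtinger f τ = wirtinger g τ := by
  rw [wirtinger, wirtinger, h.fderiv_eq]

lemma wirtinger_finset_sum {ι : Type*} {s : Finset ι} {F : ι → ℂ → ℂ} {τ : ℂ}
    (h : ∀ i ∈ s, DifferentiableAt ℝ (F i) τ) :
    wirtinger (fun z => ∑ i ∈ s, F i z) τ = ∑ i ∈ s, wirtinger (F i) τ := by
  simp [wirtinger, fderiv_fun_sum h, Finset.mul_sum, ← Finset.sum_sub_distrib]

lemma raise_congr_of_eventuallyEq {κ : ℤ} {f g : ℂ → ℂ} {τ : ℂ} (h : f =ᶠ[𝓝 τ] g) :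
    raise κ f τ = raise κ g τ := by
  rw [raise, raise, wirtinger_congr_of_eventuallyEq h, h.eq_of_nhds]

lemma hasFDerivAt_im_zpow (m : ℤ) {τ : ℂ} (hτ : τ.im ≠ 0) :
    HasFDerivAt (fun z : ℂ => (z.im : ℂ) ^ m)
      ((ContinuousLinearMap.smulRight (1 : ℝ →L[ℝ] ℝ) ((m : ℂ) * (τ.im : ℂ) ^ (m - 1))).comp
        Complex.imCLM) τ := by
  have h : HasDerivAt (fun y : ℝ => (y : ℂ) ^ m) ((m : ℂ) * (τ.im : ℂ) ^ (m - 1)) τ.im :=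
    (hasDerivAt_zpow m _ (Or.inl (by exact_mod_cast hτ))).comp_ofReal
  exact h.hasFDerivAt.comp τ Complex.imCLM.hasFDerivAt

lemma hasFDerivAt_comp_conj_mul_im_zpow {g : ℂ → ℂ} {g' : ℂ} {τ : ℂ}
    (hg : HasDerivAt g g' (conj τ)) (m : ℤ) (hτ : τ.im ≠ 0) :
    HasFDerivAt (fun z => g (conj z) * (z.im : ℂ) ^ m)
      (g (conj τ) • (ContinuousLinearMap.smulRight (1 : ℝ →L[ℝ] ℝ)
          ((m : ℂ) * (τ.im : ℂ) ^ (m - 1))).comp Complex.imCLM +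
        (τ.im : ℂ) ^ m • ((ContinuousLinearMap.smulRight (1 : ℂ →L[ℂ] ℂ) g').restrictScalars ℝ).comp
          Complex.conjCLE.toContinuousLinearMap) τ :=
  ((hg.hasFDerivAt.restrictScalars ℝ).comp τ Complex.conjCLE.hasFDerivAt).mul
    (hasFDerivAt_im_zpow m hτ)

lemma wirtinger_comp_conj_mul_im_zpow {g : ℂ → ℂ} {τ : ℂ}
    (hg : DifferentiableAt ℂ g (conj τ)) (m : ℤ) (hτ : τ.im ≠ 0) :
    wirtinger (fun z => g (conj z) * (z.im : ℂ) ^ m) τ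
      = -(Complex.I / 2) * m * g (conj τ) * (τ.im : ℂ) ^ (m - 1) := by
  rw [wirtinger_eq_of_hasFDerivAt (hasFDerivAt_comp_conj_mul_im_zpow hg.hasDerivAt m hτ)]
  simp only [add_apply, smul_apply, ContinuousLinearMap.comp_apply,
    ContinuousLinearMap.smulRight_apply, one_apply_eq_self,
    ContinuousLinearMap.coe_restrictScalars', ContinuousLinearEquiv.coe_coe, Complex.conjCLE_apply, Complex.imCLM_apply, Complex.one_im,
    Complex.I_im, map_one, Complex.conj_I, smul_eq_mul, zero_smul, one_smul]
  linear_combination (1 / 2 * (τ.im : ℂ) ^ m * deriv g (conj τ)) * Complex.I_sq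

lemma raise_sum_comp_conj_mul_im_zpow {ι : Type*} {s : Finset ι} {g : ι → ℂ → ℂ} {m : ι → ℤ}
    (κ : ℤ) {τ : ℂ} (hg : ∀ j ∈ s, DifferentiableAt ℂ (g j) (conj τ)) (hτ : τ.im ≠ 0) :
    raise κ (fun z => ∑ j ∈ s, g j (conj z) * (z.im : ℂ) ^ m j) τ
      = ∑ j ∈ s, ((κ + m j : ℤ) : ℂ) * g j (conj τ) * (τ.im : ℂ) ^ (m j - 1) := by
  have hv : (τ.im : ℂ) ≠ 0 := by exact_mod_cast hτ
  have hdiff : ∀ j ∈ s, DifferentiableAt ℝ (fun z => g j (conj z) * (z.im : ℂ) ^ m j) τ :=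
    fun j hj => (hasFDerivAt_comp_conj_mul_im_zpow (hg j hj).hasDerivAt _ hτ).differentiableAt
  rw [raise, wirtinger_finset_sum hdiff, Finset.mul_sum, Finset.mul_sum, ← Finset.sum_add_distrib]
  refine Finset.sum_congr rfl fun j hj => ?_
  have hpow : (τ.im : ℂ) ^ m j = (τ.im : ℂ) ^ (m j - 1) * τ.im := by
    rw [← zpow_add_one₀ hv, sub_add_cancel]
  rw [wirtinger_comp_conj_mul_im_zpow (hg j hj) _ hτ, hpow]
  have hweight : (κ : ℂ) / τ.im * (g j (conj τ) * ((τ.im : ℂ) ^ (m j - 1) * τ.im))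
      = κ * g j (conj τ) * (τ.im : ℂ) ^ (m j - 1) := by
    field_simp
  rw [hweight]
  push_cast
  linear_combination (-(m j * g j (conj τ) * (τ.im : ℂ) ^ (m j - 1))) * Complex.I_sq

lemma risingFactorial_succ (a : ℤ) (n : ℕ) :
    risingFactorial a (n + 1) = risingFactorial a n * (a + n) :=
  Finset.prod_range_succ _ n

lemma raiseIter_sum_comp_conj_mul_im_zpow {ι : Type*} {s : Finset ι} {g : ι → ℂ → ℂ}
    {m : ι → ℤ} (κ : ℤ) (hg : ∀ j ∈ s, Differentiable ℂ (g j)) (n : ℕ) {τ : ℂ}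
    (hτ : τ.im ≠ 0) :
    raiseIter κ n (fun z => ∑ j ∈ s, g j (conj z) * (z.im : ℂ) ^ m j) τ
      = ∑ j ∈ s, (risingFactorial (κ + m j) n : ℂ) * g j (conj τ) * (τ.im : ℂ) ^ (m j - n) := by
  induction n generalizing τ with
  | zero => simp [raiseIter, risingFactorial]
  | succ n ih =>
    have hev : raiseIter κ n (fun z => ∑ j ∈ s, g j (conj z) * (z.im : ℂ) ^ m j) =ᶠ[𝓝 τ]
        fun z => ∑ j ∈ s, (fun w => (risingFactorial (κ + m j) n : ℂ) * g j w) (conj z) *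
          (z.im : ℂ) ^ (m j - n) :=
      ((isOpen_ne_fun Complex.continuous_im continuous_const).eventually_mem hτ).mono
        fun z hz => ih hz
    rw [raiseIter, raise_congr_of_eventuallyEq hev,
      raise_sum_comp_conj_mul_im_zpow _ (fun j hj => ((hg j hj) _).const_mul _) hτ]
    refine Finset.sum_congr rfl fun j _ => ?_
    rw [risingFactorial_succ, show m j - n - 1 = m j - (n + 1 : ℕ) by push_cast; ring]
    push_cast
    ring

lemma risingFactorial_neg_natCast (m n : ℕ) :
    risingFactorial (-m) n = (-1) ^ n * m.descFactorial n := by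
  induction n with
  | zero => simp [risingFactorial]
  | succ n ih =>
    rw [risingFactorial_succ, ih, Nat.descFactorial_succ, pow_succ]
    rcases le_or_gt n m with hnm | hmn
    · push_cast [Nat.cast_sub hnm]
      ring
    · simp [Nat.descFactorial_eq_zero_iff_lt.mpr hmn]

lemma eval_add_eq_sum_hasseDeriv {R : Type*} [CommRing R] (P : R[X]) {N : ℕ}
    (hP : P.natDegree ≤ N) (w h : R) :
    P.eval (w + h) = ∑ j ∈ Finset.range (N + 1), (hasseDeriv j P).eval w * h ^ j := by
  rw [add_comm, ← taylor_eval, eval_eq_sum_range' (n := N + 1) (by rw [natDegree_taylor]; omega)]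
  simp only [taylor_coeff]

lemma raiseIter_eval_of_natDegree_le (P : ℂ[X]) {N : ℕ} (hP : P.natDegree ≤ N) {τ : ℂ}
    (hτ : τ.im ≠ 0) :
    raiseIter (-N) N (fun z => P.eval z) τ
      = (-1) ^ N * N.factorial * P.eval (conj τ) * (τ.im : ℂ) ^ (-(N : ℤ)) := by
  have htaylor : (fun z => P.eval z) = fun z => ∑ j ∈ Finset.range (N + 1),
      (fun w => (2 * Complex.I) ^ j * (hasseDeriv j P).eval w) (conj z) *
        (z.im : ℂ) ^ (j : ℤ) := by
    funext z
    have hz : z = conj z + (2 * z.im : ℝ) * Complex.I := by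
      rw [← Complex.sub_conj, add_sub_cancel]
    conv_lhs => rw [hz]
    rw [eval_add_eq_sum_hasseDeriv P hP]
    refine Finset.sum_congr rfl fun j _ => ?_
    push_cast
    rw [zpow_natCast]
    ring
  rw [htaylor, raiseIter_sum_comp_conj_mul_im_zpow _
      (fun j _ => (hasseDeriv j P).differentiable.const_mul _) N hτ,
    Finset.sum_eq_single 0]
  · simp [risingFactorial_neg_natCast, Nat.descFactorial_self]
  · intro j hj hj0
    have hweight : -(N : ℤ) + j = -((N - j : ℕ) : ℤ) := by
      have := Finset.mem_range_succ_iff.mp hj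
      omega
    rw [hweight, risingFactorial_neg_natCast,
      Nat.descFactorial_eq_zero_iff_lt.mpr (by omega)]
    simp
  · simp

lemma flipOp_aeval {k : ℕ} (hk : 1 ≤ k) (P : ℝ[X]) (hP : P.natDegree ≤ 2 * k - 2) {τ : ℂ}
    (hτ : τ.im ≠ 0) :
    flipOp k (fun z => aeval z P) τ = -aeval τ P := by
  have hweight : 2 - 2 * (k : ℤ) = -((2 * k - 2 : ℕ) : ℤ) := by omega
  have heven : ((-1 : ℂ)) ^ (2 * k - 2) = 1 := Even.neg_one_pow ⟨k - 1, by omega⟩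
  simp_rw [flipOp, ← eval_map_algebraMap, hweight]
  rw [raiseIter_eval_of_natDegree_le _ (natDegree_map_le.trans hP) hτ, eval_map_algebraMap,
    eval_map_algebraMap, aeval_conj]
  have hv : (τ.im : ℂ) ≠ 0 := by exact_mod_cast hτ
  have hfac : ((2 * k - 2).factorial : ℂ) ≠ 0 := Nat.cast_ne_zero.mpr (Nat.factorial_ne_zero _)
  simp only [heven, one_mul, zpow_neg, zpow_natCast, map_mul, map_natCast, map_inv₀, map_pow,
    Complex.conj_ofReal, Complex.conj_conj, neg_mul, neg_inj]
  field_simp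

theorem flip_qval_general (k : ℕ) (hk : 2 ≤ k)
    (a b c : ℤ) (τ : ℂ) (hτ : 0 < τ.im) :
    flipOp k (fun z => qval (a, b, c) z ^ (k - 1)) τ = - qval (a, b, c) τ ^ (k - 1) := by
  set Q : ℝ[X] := C (a : ℝ) * X ^ 2 + C (b : ℝ) * X + C (c : ℝ)
  have hQ : ∀ z, qval (a, b, c) z ^ (k - 1) = aeval z (Q ^ (k - 1)) := fun z => by simp [Q, qval]
  have hdeg : (Q ^ (k - 1)).natDegree ≤ 2 * k - 2 :=
    natDegree_pow_le.trans ((Nat.mul_le_mul_left _ natDegree_quadratic_le).trans (by omega))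
  simp_rw [hQ]
  exact flipOp_aeval (by omega) _ hdeg hτ.ne'

/-- For a quadratic form `Q = [a,b,c]` of positive non-square discriminant `D`,
`𝔉_{2−2k}(Q(·,1)^{k−1})(τ) = −Q(τ,1)^{k−1}` on `ℍ`. -/
theorem flip_qval (k : ℕ) (hk : 2 ≤ k) (D : ℤ) (hD : 0 < D) (hDns : ¬ IsSquare D)
    (a b c : ℤ) (hdisc : b ^ 2 - 4 * a * c = D) (τ : ℂ) (hτ : 0 < τ.im) :
    flipOp k (fun z => qval (a, b, c) z ^ (k - 1)) τ = - qval (a, b, c) τ ^ (k - 1) :=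
  flip_qval_general k hk a b c τ hτ

end
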